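/- If a necklace N is attached to a finite family 𝒰 of vertex sets and X is a finite set of vertices, then N − X has a strong component that is itself a necklace attached to 𝒰. -/

import Mathlib

/-!
Choose `n₀` beyond every level of the necklace that meets `X`. From bead `n₀` on, the beads
together with the paths between consecutive beads form strongly connected segments avoiding `X`,
so they all lie in one strong component `C` of `N − X`. Only finitely many vertices of `C` come
before bead `n₀`, and the walks in `C` joining them to bead `n₀` pass through finitely many
levels, say up to bead `n`. Merging everything of `C` up to bead `n` into one finite, strongly
connected bead and keeping the later beads and paths gives a necklace with vertex set `C`,
attached to `𝒰` because it keeps all but finitely many beads of `N`.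
-/

variable {V : Type*}

/-- Reachability from `a` to `b` by a directed walk staying inside the vertex set `S`. -/
def ReachIn (D : V → V → Prop) (S : Set V) (a b : V) : Prop :=
  a ∈ S ∧ b ∈ S ∧ Relation.ReflTransGen (fun x y => y ∈ S ∧ D x y) a b

/-- `C` is a strong component of the subdigraph of `D` induced on `S`. -/
def IsSCCIn (D : V → V → Prop) (S : Set V) (C : Set V) : Prop :=
  ∃ a ∈ S, C = {b | ReachIn D S a b ∧ ReachIn D S b a}

/-- A directed ray in `D`. -/
def IsRay (D : V → V → Prop) (R : ℕ → V) : Prop :=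
  Function.Injective R ∧ ∀ n, D (R n) (R (n + 1))

/-- A reverse directed ray in `D`. -/
def IsRevRay (D : V → V → Prop) (R : ℕ → V) : Prop :=
  Function.Injective R ∧ ∀ n, D (R (n + 1)) (R n)

/-- The ray `R` has a tail inside the vertex set `C`. -/
def HasTailIn (R : ℕ → V) (C : Set V) : Prop :=
  ∃ n, ∀ m, n ≤ m → R m ∈ C

/-- A solid ray: for every finite `X` it has a tail in some strong component of `D − X`. -/
def Solid (D : V → V → Prop) (R : ℕ → V) : Prop :=
  IsRay D R ∧ ∀ X : Finset V, ∃ C, IsSCCIn D ((↑X : Set V)ᶜ) C ∧ HasTailIn R C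

/-- Two solid rays are end-equivalent: for every finite `X` they have tails in the same
strong component of `D − X`. -/
def EndEquiv (D : V → V → Prop) (R R' : ℕ → V) : Prop :=
  ∀ X : Finset V, ∃ C, IsSCCIn D ((↑X : Set V)ᶜ) C ∧ HasTailIn R C ∧ HasTailIn R' C

/-- `Ω` is an end of `D`: the class of solid rays equivalent to some solid ray. -/
def IsEnd (D : V → V → Prop) (Ω : Set (ℕ → V)) : Prop :=
  ∃ R, Solid D R ∧ Ω = {R' | Solid D R' ∧ EndEquiv D R R'}

/-- A (nonempty) directed path, recorded as its list of vertices. -/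
def IsPathList (D : V → V → Prop) (l : List V) : Prop :=
  l ≠ [] ∧ l.Nodup ∧ l.Chain' D

/-- Infinitely many pairwise disjoint `A`–`B` paths in `D` (each meeting `A` precisely in its
first vertex and `B` precisely in its last vertex). -/
def DisjointPathsFrom (D : V → V → Prop) (A B : Set V) : Prop :=
  ∃ P : ℕ → List V,
    (∀ k, IsPathList D (P k)) ∧
    (∀ j k, j ≠ k → ∀ x ∈ P j, x ∉ P k) ∧
    (∀ k, ∃ a, (P k).head? = some a ∧ a ∈ A) ∧
    (∀ k, ∃ b, (P k).getLast? = some b ∧ b ∈ B) ∧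
    (∀ k, ∀ x ∈ (P k).tail, x ∉ A) ∧
    (∀ k, ∀ x ∈ (P k).dropLast, x ∉ B)

/-- A necklace in `D`: an inflated symmetric ray with finite branch sets (beads), given by its
beads together with the connecting (subdividing) paths in both directions. -/
structure Necklace (D : V → V → Prop) where
  bead : ℕ → Set V
  fwd : ℕ → List V
  bwd : ℕ → List V
  bead_fin : ∀ n, (bead n).Finite
  bead_nonempty : ∀ n, (bead n).Nonempty
  bead_disj : ∀ m n, m ≠ n → Disjoint (bead m) (bead n)
  bead_strong : ∀ n, ∀ a ∈ bead n, ∀ b ∈ bead n, ReachIn D (bead n) a b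
  fwd_path : ∀ n, IsPathList D (fwd n)
  bwd_path : ∀ n, IsPathList D (bwd n)
  fwd_head : ∀ n a, (fwd n).head? = some a → a ∈ bead n
  fwd_last : ∀ n b, (fwd n).getLast? = some b → b ∈ bead (n + 1)
  bwd_head : ∀ n a, (bwd n).head? = some a → a ∈ bead (n + 1)
  bwd_last : ∀ n b, (bwd n).getLast? = some b → b ∈ bead n
  fwd_inner : ∀ n, ∀ x ∈ (fwd n).tail.dropLast, ∀ m, x ∉ bead m
  bwd_inner : ∀ n, ∀ x ∈ (bwd n).tail.dropLast, ∀ m, x ∉ bead m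
  fwd_fwd_disj : ∀ m n, m ≠ n → ∀ x ∈ (fwd m).tail.dropLast, x ∉ (fwd n).tail.dropLast
  bwd_bwd_disj : ∀ m n, m ≠ n → ∀ x ∈ (bwd m).tail.dropLast, x ∉ (bwd n).tail.dropLast
  fwd_bwd_disj : ∀ m n, ∀ x ∈ (fwd m).tail.dropLast, x ∉ (bwd n).tail.dropLast

/-- The vertex set of a necklace. -/
def Necklace.verts {D : V → V → Prop} (N : Necklace D) : Set V :=
  (⋃ n, N.bead n) ∪ {x | ∃ n, x ∈ N.fwd n ∨ x ∈ N.bwd n}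

/-- A necklace is attached to `𝒰` if infinitely many of its beads meet every set in `𝒰`. -/
def Necklace.AttachedTo {D : V → V → Prop} (N : Necklace D) (𝒰 : Finset (Set V)) : Prop :=
  {n | ∀ U ∈ 𝒰, (N.bead n ∩ U).Nonempty}.Infinite

/-- A necklace represents the end of the solid ray `R`: for every finite `X`, all but finitely
many beads lie in the strong component of `D − X` in which `R` has a tail. -/
def NecklaceRepresents {D : V → V → Prop} (N : Necklace D) (R : ℕ → V) : Prop :=
  ∀ X : Finset V, ∃ C, IsSCCIn D ((↑X : Set V)ᶜ) C ∧ HasTailIn R C ∧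
    ∃ n₀, ∀ n, n₀ ≤ n → N.bead n ⊆ C

/-- `URankLE D 𝒰 S α`: the subdigraph of `D` induced on `S` has `𝒰`-rank at most `α`. -/
inductive URankLE (D : V → V → Prop) (𝒰 : Finset (Set V)) : Set V → Ordinal → Prop
  | base (S : Set V) (α : Ordinal) (U : Set V) (hU : U ∈ 𝒰) (h : (U ∩ S).Finite) :
      URankLE D 𝒰 S α
  | step (S : Set V) (α : Ordinal) (X : Finset V) (r : Set V → Ordinal)
      (hr : ∀ C, IsSCCIn D (S \ ↑X) C → r C < α)
      (h : ∀ C, IsSCCIn D (S \ ↑X) C → URankLE D 𝒰 C (r C)) :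
      URankLE D 𝒰 S α

/-- `D` (induced on `S`) has `𝒰`-rank exactly `α`. -/
def HasURank (D : V → V → Prop) (𝒰 : Finset (Set V)) (S : Set V) (α : Ordinal) : Prop :=
  URankLE D 𝒰 S α ∧ ∀ β < α, ¬ URankLE D 𝒰 S β

/-- A vertex-direction of `D`. -/
def IsVertexDirection (D : V → V → Prop) (f : Finset V → Set V) : Prop :=
  (∀ X : Finset V, IsSCCIn D ((↑X : Set V)ᶜ) (f X)) ∧
  ∀ X Y : Finset V, X ⊆ Y → f Y ⊆ f X

/-- A separation `(A,B)` of `D`: `A ∪ B = V(D)` and no edge from `B∖A` to `A∖B`. -/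
def IsSep (D : V → V → Prop) (A B : Set V) : Prop :=
  A ∪ B = Set.univ ∧ ∀ a ∈ B \ A, ∀ b ∈ A \ B, ¬ D a b

/-- A finite order separation `(A,B)` points towards the vertex-direction `f`. -/
def PointsTowards (D : V → V → Prop) (f : Finset V → Set V) (A B : Set V)
    (h : (A ∩ B).Finite) : Prop :=
  f h.toFinset ⊆ B \ A

/-- A finite order separation `(A,B)` points away from the vertex-direction `f`. -/
def PointsAway (D : V → V → Prop) (f : Finset V → Set V) (A B : Set V)
    (h : (A ∩ B).Finite) : Prop :=
  f h.toFinset ⊆ A \ B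

/-- The vertex `v` dominates the vertex-direction `f`. -/
def DomDir (D : V → V → Prop) (v : V) (f : Finset V → Set V) : Prop :=
  ∀ A B, IsSep D A B → ∀ h : (A ∩ B).Finite, PointsAway D f A B h → v ∈ A

/-- An infinite `v`–`B` fan: infinitely many `v`–`B` paths meeting pairwise precisely in `v`. -/
def Fan (D : V → V → Prop) (v : V) (B : Set V) : Prop :=
  ∃ P : ℕ → List V,
    (∀ k, IsPathList D (P k)) ∧
    (∀ k, (P k).head? = some v) ∧
    (∀ k, 2 ≤ (P k).length) ∧
    (∀ k, ∃ b, (P k).getLast? = some b ∧ b ∈ B) ∧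
    (∀ k, ∀ x ∈ (P k).dropLast, x ∉ B) ∧
    (∀ j k, j ≠ k → ∀ x ∈ (P j).tail, x ∉ (P k).tail)

/-- Limit edge between the ends of the solid rays `R` and `R'`. -/
def LimitEdgeEE (D : V → V → Prop) (R R' : ℕ → V) : Prop :=
  ∀ (X : Finset V) C C', IsSCCIn D ((↑X : Set V)ᶜ) C → HasTailIn R C →
    IsSCCIn D ((↑X : Set V)ᶜ) C' → HasTailIn R' C' → C ≠ C' →
    ∃ a ∈ C, ∃ b ∈ C', D a b

/-- Limit edge from the vertex `v` to the end of the solid ray `R`. -/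
def LimitEdgeVE (D : V → V → Prop) (v : V) (R : ℕ → V) : Prop :=
  ∀ (X : Finset V) C, IsSCCIn D ((↑X : Set V)ᶜ) C → HasTailIn R C → v ∉ C →
    ∃ b ∈ C, D v b

/-- Limit edge from the end of the solid ray `R` to the vertex `v`. -/
def LimitEdgeEV (D : V → V → Prop) (R : ℕ → V) (v : V) : Prop :=
  ∀ (X : Finset V) C, IsSCCIn D ((↑X : Set V)ᶜ) C → HasTailIn R C → v ∉ C →
    ∃ a ∈ C, D a v

/-- A subdivided infinite out-star in `D` with centre `c`, given by its paths. -/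
def IsStar (D : V → V → Prop) (c : V) (P : ℕ → List V) : Prop :=
  (∀ k, IsPathList D (P k)) ∧ (∀ k, (P k).head? = some c) ∧
  (∀ k, 2 ≤ (P k).length) ∧
  (∀ j k, j ≠ k → ∀ x ∈ (P j).tail, x ∉ (P k).tail)

/-- A directed comb in `D` with spine `R`, given by its (pairwise disjoint) paths each meeting
`R` precisely in its first vertex. -/
def IsComb (D : V → V → Prop) (R : ℕ → V) (P : ℕ → List V) : Prop :=
  IsRay D R ∧ (∀ k, IsPathList D (P k)) ∧
  (∀ k, ∃ n, (P k).head? = some (R n)) ∧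
  (∀ k, ∀ x ∈ (P k).tail, ∀ n, x ≠ R n) ∧
  (∀ j k, j ≠ k → ∀ x ∈ P j, x ∉ P k)

/-- A star in `D` whose `k`-th leaf is `a k`. -/
def StarAttachedWith (D : V → V → Prop) (a : ℕ → V) : Prop :=
  ∃ c P, IsStar D c P ∧ ∀ k, (P k).getLast? = some (a k)

/-- A comb in `D` whose `k`-th tooth is `a k`. -/
def CombAttachedWith (D : V → V → Prop) (a : ℕ → V) : Prop :=
  ∃ R P, IsComb D R P ∧ ∀ k, (P k).getLast? = some (a k)

/-- `a` and `b` are consecutive entries of the list `l`. -/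
def AdjInList (l : List V) (a b : V) : Prop :=
  ∃ l₁ l₂, l = l₁ ++ a :: b :: l₂

/-- The edge relation of (a subdigraph of `D` forming) the necklace `N`: all `D`-edges inside a
bead together with the edges of the connecting paths. -/
def Necklace.edges {D : V → V → Prop} (N : Necklace D) (a b : V) : Prop :=
  D a b ∧ ((∃ n, a ∈ N.bead n ∧ b ∈ N.bead n) ∨
    (∃ n, AdjInList (N.fwd n) a b ∨ AdjInList (N.bwd n) a b))

/-- A generalized ray: a directed ray (`true`) or a reverse directed ray (`false`). -/
def IsGenRay (D : V → V → Prop) : Bool × (ℕ → V) → Prop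
  | (true, R) => IsRay D R
  | (false, R) => IsRevRay D R

/-- Pre-end equivalence of generalized rays: infinitely many disjoint paths in both
directions. -/
def PreEquiv (D : V → V → Prop) (Q Q' : Bool × (ℕ → V)) : Prop :=
  DisjointPathsFrom D (Set.range Q.2) (Set.range Q'.2) ∧
  DisjointPathsFrom D (Set.range Q'.2) (Set.range Q.2)

/-- The pre-end `γ` includes the end represented by the solid ray `R`. -/
def IncludesEnd (D : V → V → Prop) (γ : Set (Bool × (ℕ → V))) (R : ℕ → V) : Prop :=
  Solid D R ∧ ∀ R', Solid D R' → EndEquiv D R R' → (true, R') ∈ γ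

/-- The set of edges of `D` from `A` to `B`. -/
def EdgesBetween (D : V → V → Prop) (A B : Set V) : Set (V × V) :=
  {e | D e.1 e.2 ∧ e.1 ∈ A ∧ e.2 ∈ B}

/-- A bundle of `D − X`. -/
def IsBundle (D : V → V → Prop) (X : Finset V) (E : Set (V × V)) : Prop :=
  E.Nonempty ∧
  ((∃ C C', IsSCCIn D ((↑X : Set V)ᶜ) C ∧ IsSCCIn D ((↑X : Set V)ᶜ) C' ∧ C ≠ C' ∧
      E = EdgesBetween D C C') ∨
   (∃ v ∈ X, ∃ C, IsSCCIn D ((↑X : Set V)ᶜ) C ∧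
      (E = EdgesBetween D {v} C ∨ E = EdgesBetween D C {v})))

/-- Compatibility `f(X) ⊇ f(Y)` between values of a direction (a strong component is regarded
as containing a bundle if it contains all its edges). -/
def DirCompat : Set V ⊕ Set (V × V) → Set V ⊕ Set (V × V) → Prop
  | Sum.inl C, Sum.inl C' => C' ⊆ C
  | Sum.inl C, Sum.inr E' => ∀ e ∈ E', e.1 ∈ C ∧ e.2 ∈ C
  | Sum.inr _, Sum.inl _ => False
  | Sum.inr E, Sum.inr E' => E' ⊆ E

/-- A direction of `D`: maps each finite `X` to a strong component or a bundle of `D − X`,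
compatibly. -/
def IsDirection (D : V → V → Prop) (f : Finset V → Set V ⊕ Set (V × V)) : Prop :=
  (∀ X : Finset V, (∃ C, IsSCCIn D ((↑X : Set V)ᶜ) C ∧ f X = Sum.inl C) ∨
    (∃ E, IsBundle D X E ∧ f X = Sum.inr E)) ∧
  ∀ X Y : Finset V, X ⊆ Y → DirCompat (f X) (f Y)

/-- An edge-direction: a direction whose value is a bundle for some finite `X`. -/
def IsEdgeDirection (D : V → V → Prop) (f : Finset V → Set V ⊕ Set (V × V)) : Prop :=
  IsDirection D f ∧ ∃ (X : Finset V) (E : Set (V × V)), f X = Sum.inr E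

/-- The three kinds of (potential) limit edges: end–end, vertex–end, end–vertex.
Ends are given as sets of (solid) rays. -/
inductive LimitEdgeObj (V : Type*) where
  | ee (Ω₁ Ω₂ : Set (ℕ → V))
  | ve (v : V) (Ω : Set (ℕ → V))
  | ev (Ω : Set (ℕ → V)) (v : V)

/-- `l` is a limit edge of `D`. -/
def IsLimitEdge (D : V → V → Prop) : LimitEdgeObj V → Prop
  | LimitEdgeObj.ee Ω₁ Ω₂ => IsEnd D Ω₁ ∧ IsEnd D Ω₂ ∧ Ω₁ ≠ Ω₂ ∧
      ∀ R ∈ Ω₁, ∀ R' ∈ Ω₂, LimitEdgeEE D R R'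
  | LimitEdgeObj.ve v Ω => IsEnd D Ω ∧ ∀ R ∈ Ω, LimitEdgeVE D v R
  | LimitEdgeObj.ev Ω v => IsEnd D Ω ∧ ∀ R ∈ Ω, LimitEdgeEV D R v

/-- `f` agrees with the map `f_λ` for the end–end limit edge `Ω₁Ω₂`. -/
def AgreesEE (D : V → V → Prop) (Ω₁ Ω₂ : Set (ℕ → V))
    (f : Finset V → Set V ⊕ Set (V × V)) : Prop :=
  ∀ (X : Finset V), ∀ R ∈ Ω₁, ∀ R' ∈ Ω₂, ∀ C C',
    IsSCCIn D ((↑X : Set V)ᶜ) C → HasTailIn R C →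
    IsSCCIn D ((↑X : Set V)ᶜ) C' → HasTailIn R' C' →
    (C = C' → f X = Sum.inl C) ∧ (C ≠ C' → f X = Sum.inr (EdgesBetween D C C'))

/-- `f` agrees with the map `f_λ` for the vertex–end limit edge `vΩ`. -/
def AgreesVE (D : V → V → Prop) (v : V) (Ω : Set (ℕ → V))
    (f : Finset V → Set V ⊕ Set (V × V)) : Prop :=
  ∀ (X : Finset V), ∀ R ∈ Ω, ∀ C, IsSCCIn D ((↑X : Set V)ᶜ) C → HasTailIn R C →
    (v ∈ C → f X = Sum.inl C) ∧
    (v ∈ (↑X : Set V) → f X = Sum.inr (EdgesBetween D {v} C)) ∧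
    (∀ C', IsSCCIn D ((↑X : Set V)ᶜ) C' → v ∈ C' → C' ≠ C →
      f X = Sum.inr (EdgesBetween D C' C))

/-- `f` agrees with the map `f_λ` for the end–vertex limit edge `Ωv`. -/
def AgreesEV (D : V → V → Prop) (Ω : Set (ℕ → V)) (v : V)
    (f : Finset V → Set V ⊕ Set (V × V)) : Prop :=
  ∀ (X : Finset V), ∀ R ∈ Ω, ∀ C, IsSCCIn D ((↑X : Set V)ᶜ) C → HasTailIn R C →
    (v ∈ C → f X = Sum.inl C) ∧
    (v ∈ (↑X : Set V) → f X = Sum.inr (EdgesBetween D C {v})) ∧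
    (∀ C', IsSCCIn D ((↑X : Set V)ᶜ) C' → v ∈ C' → C' ≠ C →
      f X = Sum.inr (EdgesBetween D C C'))

/-- `f` agrees with `f_λ` for the limit edge `l`. -/
def Agrees (D : V → V → Prop) : LimitEdgeObj V → (Finset V → Set V ⊕ Set (V × V)) → Prop
  | LimitEdgeObj.ee Ω₁ Ω₂, f => AgreesEE D Ω₁ Ω₂ f
  | LimitEdgeObj.ve v Ω, f => AgreesVE D v Ω f
  | LimitEdgeObj.ev Ω v, f => AgreesEV D Ω v f

open Relation Set

lemma List.head?_eq_or_getLast?_eq_or_mem_tail_dropLast {α : Type*} {l : List α} {x : α}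
    (hx : x ∈ l) : l.head? = some x ∨ l.getLast? = some x ∨ x ∈ l.tail.dropLast := by
  cases l with
  | nil => cases hx
  | cons a t =>
    rcases List.mem_cons.mp hx with rfl | hxt
    · exact .inl rfl
    · have ht : t ≠ [] := List.ne_nil_of_mem hxt
      by_cases hlast : t.getLast ht = x
      · right; left
        rw [List.getLast?_eq_some_getLast (List.cons_ne_nil a t), List.getLast_cons ht, hlast]
      · right; right
        rw [← List.dropLast_append_getLast ht] at hxt
        exact (List.mem_append.1 hxt).resolve_right fun h => hlast (List.mem_singleton.1 h).symm

section Reachability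

variable {E E' : V → V → Prop} {S T : Set V} {a b c : V}

lemma ReachIn.refl (ha : a ∈ S) : ReachIn E S a a := ⟨ha, ha, .refl⟩

lemma ReachIn.single (ha : a ∈ S) (hb : b ∈ S) (hab : E a b) : ReachIn E S a b :=
  ⟨ha, hb, .single ⟨hb, hab⟩⟩

lemma ReachIn.trans (hab : ReachIn E S a b) (hbc : ReachIn E S b c) : ReachIn E S a c :=
  ⟨hab.1, hbc.2.1, hab.2.2.trans hbc.2.2⟩

lemma ReachIn.mono (hST : S ⊆ T) (h : ReachIn E S a b) : ReachIn E T a b :=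
  ⟨hST h.1, hST h.2.1, ReflTransGen.mono (fun _ _ hxy => ⟨hST hxy.1, hxy.2⟩) _ _ h.2.2⟩

lemma ReachIn.mono_rel (hEE' : ∀ x ∈ S, ∀ y ∈ S, E x y → E' x y) (h : ReachIn E S a b) :
    ReachIn E' S a b := by
  obtain ⟨ha, hb, hab⟩ := h
  refine ⟨ha, hb, ?_⟩
  induction hab using ReflTransGen.head_induction_on with
  | refl => exact .refl
  | head hxy _ ih => exact .head ⟨hxy.1, hEE' _ ha _ hxy.1 hxy.2⟩ (ih hxy.1)

lemma ReachIn.exists_inter_of_monotone {T : ℕ → Set V} (hT : Monotone T) (hST : S ⊆ ⋃ m, T m)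
    (h : ReachIn E S a b) : ∃ m, ReachIn E (S ∩ T m) a b := by
  obtain ⟨ha, -, hab⟩ := h
  induction hab with
  | refl =>
    obtain ⟨m, hm⟩ := mem_iUnion.1 (hST ha)
    exact ⟨m, .refl ⟨ha, hm⟩⟩
  | tail _ hcb ih =>
    obtain ⟨m, hm⟩ := ih
    obtain ⟨m', hm'⟩ := mem_iUnion.1 (hST hcb.1)
    have hsub : S ∩ T m ⊆ S ∩ T (max m m') := inter_subset_inter_right _ (hT (le_max_left _ _))
    exact ⟨max m m', (hm.mono hsub).trans
      (.single (hsub hm.2.1) ⟨hcb.1, hT (le_max_right _ _) hm'⟩ hcb.2)⟩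

lemma List.IsChain.reachIn_head {l : List V} (hl : l.IsChain E) (hS : ∀ x ∈ l, x ∈ S)
    (hne : l ≠ []) {x : V} (hx : x ∈ l) : ReachIn E S (l.head hne) x :=
  (List.IsChain.iff_mem.1 hl).induction (ReachIn E S (l.head hne)) l
    (fun _ _ hyz hy => hy.trans (.single (hS _ hyz.1) (hS _ hyz.2.1) hyz.2.2))
    (fun _ => .refl (hS _ (List.head_mem hne))) x hx

lemma List.IsChain.reachIn_getLast {l : List V} (hl : l.IsChain E) (hS : ∀ x ∈ l, x ∈ S)
    (hne : l ≠ []) {x : V} (hx : x ∈ l) : ReachIn E S x (l.getLast hne) :=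
  (List.IsChain.iff_mem.1 hl).backwards_induction (ReachIn E S · (l.getLast hne)) l
    (fun _ _ hyz hz => (ReachIn.single (hS _ hyz.1) (hS _ hyz.2.1) hyz.2.2).trans hz)
    (fun _ => .refl (hS _ (List.getLast_mem hne))) x hx

end Reachability

def StronglyConnectedIn (E : V → V → Prop) (S : Set V) : Prop :=
  ∀ a ∈ S, ∀ b ∈ S, ReachIn E S a b

def sccOf (E : V → V → Prop) (S : Set V) (a : V) : Set V :=
  {b | ReachIn E S a b ∧ ReachIn E S b a}

section StronglyConnected

variable {E : V → V → Prop} {S T C : Set V} {a r : V}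

lemma stronglyConnectedIn_of_root (h : ∀ x ∈ S, ReachIn E S r x ∧ ReachIn E S x r) :
    StronglyConnectedIn E S :=
  fun a ha b hb => (h a ha).2.trans (h b hb).1

lemma StronglyConnectedIn.union (hS : StronglyConnectedIn E S) (hT : StronglyConnectedIn E T)
    (hST : (S ∩ T).Nonempty) : StronglyConnectedIn E (S ∪ T) := by
  obtain ⟨c, hcS, hcT⟩ := hST
  refine stronglyConnectedIn_of_root (r := c) fun x hx => ?_
  rcases hx with hx | hx
  · exact ⟨(hS c hcS x hx).mono subset_union_left, (hS x hx c hcS).mono subset_union_left⟩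
  · exact ⟨(hT c hcT x hx).mono subset_union_right, (hT x hx c hcT).mono subset_union_right⟩

lemma stronglyConnectedIn_cycle {A B : Set V} {P Q : List V} (hA : StronglyConnectedIn E A)
    (hB : StronglyConnectedIn E B) (hP : P.IsChain E) (hQ : Q.IsChain E)
    (hPne : P ≠ []) (hQne : Q ≠ []) (hPA : P.head hPne ∈ A) (hPB : P.getLast hPne ∈ B)
    (hQB : Q.head hQne ∈ B) (hQA : Q.getLast hQne ∈ A) :
    StronglyConnectedIn E (A ∪ {x | x ∈ P ∨ x ∈ Q} ∪ B) := by
  set S := A ∪ {x | x ∈ P ∨ x ∈ Q} ∪ B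
  have hPS : ∀ x ∈ P, x ∈ S := fun x hx => .inl (.inr (.inl hx))
  have hQS : ∀ x ∈ Q, x ∈ S := fun x hx => .inl (.inr (.inr hx))
  have hA' : ∀ a ∈ A, ∀ b ∈ A, ReachIn E S a b :=
    fun a ha b hb => (hA a ha b hb).mono fun _ h => .inl (.inl h)
  have hB' : ∀ a ∈ B, ∀ b ∈ B, ReachIn E S a b :=
    fun a ha b hb => (hB a ha b hb).mono fun _ h => .inr h
  have h_to_B : ∀ b ∈ B, ReachIn E S (P.head hPne) b := fun b hb =>
    (hP.reachIn_getLast hPS hPne (List.head_mem hPne)).trans (hB' _ hPB b hb)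
  have h_from_B : ∀ b ∈ B, ReachIn E S b (P.head hPne) := fun b hb =>
    ((hB' b hb _ hQB).trans (hQ.reachIn_getLast hQS hQne (List.head_mem hQne))).trans
      (hA' _ hQA _ hPA)
  refine stronglyConnectedIn_of_root (r := P.head hPne) fun x hx => ?_
  rcases hx with (hx | hx | hx) | hx
  · exact ⟨hA' _ hPA x hx, hA' x hx _ hPA⟩
  · exact ⟨hP.reachIn_head hPS hPne hx, (hP.reachIn_getLast hPS hPne hx).trans (h_from_B _ hPB)⟩
  · exact ⟨(h_to_B _ hQB).trans (hQ.reachIn_head hQS hQne hx),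
      (hQ.reachIn_getLast hQS hQne hx).trans (hA' _ hQA _ hPA)⟩
  · exact ⟨h_to_B x hx, h_from_B x hx⟩

lemma StronglyConnectedIn.induce (h : StronglyConnectedIn E S) (hSC : S ⊆ C) :
    StronglyConnectedIn (fun a b => E a b ∧ a ∈ C ∧ b ∈ C) S :=
  fun a ha b hb => (h a ha b hb).mono_rel fun _ hx _ hy hxy => ⟨hxy, hSC hx, hSC hy⟩

lemma isSCCIn_sccOf (ha : a ∈ S) : IsSCCIn E S (sccOf E S a) := ⟨a, ha, rfl⟩

lemma StronglyConnectedIn.subset_sccOf (hT : StronglyConnectedIn E T) (hTS : T ⊆ S)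
    (ha : a ∈ T) : T ⊆ sccOf E S a :=
  fun b hb => ⟨(hT a ha b hb).mono hTS, (hT b hb a ha).mono hTS⟩

/-- A walk in `S` between two vertices of a strong component never leaves it. -/
lemma stronglyConnectedIn_sccOf : StronglyConnectedIn E (sccOf E S a) := by
  intro x hx y hy
  refine ⟨hx, hy, ?_⟩
  have hxy : ReflTransGen (fun u v => v ∈ S ∧ E u v) x y := (hx.2.trans hy.1).2.2
  induction hxy using ReflTransGen.head_induction_on with
  | refl => exact .refl
  | @head u w huw hwy ih =>
    have hw : w ∈ sccOf E S a :=
      ⟨hx.1.trans (.single hx.1.2.1 huw.1 huw.2), ReachIn.trans ⟨huw.1, hy.1.2.1, hwy⟩ hy.2⟩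
    exact .head ⟨hw, huw.2⟩ (ih hw)

lemma exists_reachIn_inter_of_finite {T : ℕ → Set V} (hT : Monotone T) (hST : S ⊆ ⋃ m, T m)
    (hS : StronglyConnectedIn E S) {K : Set V} (hK : K.Finite) (hKS : K ⊆ S) :
    ∃ m, ∀ a ∈ K, ∀ b ∈ K, ReachIn E (S ∩ T m) a b := by
  have : ∀ p : V × V, ∃ m, p ∈ K ×ˢ K → ReachIn E (S ∩ T m) p.1 p.2 := by
    rintro ⟨a, b⟩
    by_cases hp : (a, b) ∈ K ×ˢ K
    · obtain ⟨m, hm⟩ := (hS a (hKS hp.1) b (hKS hp.2)).exists_inter_of_monotone hT hST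
      exact ⟨m, fun _ => hm⟩
    · exact ⟨0, fun h => absurd h hp⟩
  choose m hm using this
  obtain ⟨M, hM⟩ := ((hK.prod hK).image m).bddAbove
  exact ⟨M, fun a ha b hb => (hm (a, b) ⟨ha, hb⟩).mono
    (inter_subset_inter_right _ (hT (hM ⟨_, ⟨ha, hb⟩, rfl⟩)))⟩

end StronglyConnected

lemma adjInList_mem_right {l : List V} {a b : V} (h : AdjInList l a b) : b ∈ l := by
  obtain ⟨l₁, l₂, rfl⟩ := h
  simp

namespace Necklace

variable {D : V → V → Prop} (N : Necklace D)

def level (k : ℕ) : Set V := N.bead k ∪ {x | x ∈ N.fwd k ∨ x ∈ N.bwd k}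

def inner (k : ℕ) : Set V := {x | x ∈ (N.fwd k).tail.dropLast ∨ x ∈ (N.bwd k).tail.dropLast}

def segment (i j : ℕ) : Set V := {x | x ∈ N.bead j ∨ ∃ k, i ≤ k ∧ k < j ∧ x ∈ N.level k}

def beyond (n : ℕ) : Set V := {x | (∃ m, n < m ∧ x ∈ N.bead m) ∨ ∃ m, n ≤ m ∧ x ∈ N.inner m}

variable {N} {x : V} {i i' j k m n : ℕ}

lemma bead_eq_of_mem (hm : x ∈ N.bead m) (hn : x ∈ N.bead n) : m = n := by
  by_contra h
  exact disjoint_left.1 (N.bead_disj m n h) hm hn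

lemma notMem_bead_of_mem_inner (hx : x ∈ N.inner k) : x ∉ N.bead m :=
  hx.elim (N.fwd_inner k x · m) (N.bwd_inner k x · m)

lemma eq_of_mem_inner (hk : x ∈ N.inner k) (hm : x ∈ N.inner m) : k = m := by
  by_contra h
  rcases hk with hk | hk <;> rcases hm with hm | hm
  · exact N.fwd_fwd_disj k m h x hk hm
  · exact N.fwd_bwd_disj k m x hk hm
  · exact N.fwd_bwd_disj m k x hm hk
  · exact N.bwd_bwd_disj k m h x hk hm

lemma mem_fwd_or_mem_bwd_of_mem_inner (hx : x ∈ N.inner k) : x ∈ N.fwd k ∨ x ∈ N.bwd k :=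
  hx.imp (List.mem_of_mem_tail <| List.mem_of_mem_dropLast ·)
    (List.mem_of_mem_tail <| List.mem_of_mem_dropLast ·)

lemma inner_subset_level : N.inner k ⊆ N.level k := fun _ hx =>
  .inr (mem_fwd_or_mem_bwd_of_mem_inner hx)

lemma mem_bead_or_mem_inner_of_mem_level (hx : x ∈ N.level k) :
    x ∈ N.bead k ∨ x ∈ N.bead (k + 1) ∨ x ∈ N.inner k := by
  rcases hx with hx | hx | hx
  · exact .inl hx
  · rcases List.head?_eq_or_getLast?_eq_or_mem_tail_dropLast hx with h | h | h
    exacts [.inl (N.fwd_head k x h), .inr (.inl (N.fwd_last k x h)), .inr (.inr (.inl h))]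
  · rcases List.head?_eq_or_getLast?_eq_or_mem_tail_dropLast hx with h | h | h
    exacts [.inr (.inl (N.bwd_head k x h)), .inl (N.bwd_last k x h), .inr (.inr (.inr h))]

lemma level_eq_of_mem_bead (hx : x ∈ N.bead m) (hk : x ∈ N.level k) : k = m ∨ k + 1 = m := by
  rcases mem_bead_or_mem_inner_of_mem_level hk with h | h | h
  exacts [.inl (bead_eq_of_mem h hx), .inr (bead_eq_of_mem h hx),
    absurd hx (notMem_bead_of_mem_inner h)]

lemma level_eq_of_mem_inner (hx : x ∈ N.inner m) (hk : x ∈ N.level k) : k = m := by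
  rcases mem_bead_or_mem_inner_of_mem_level hk with h | h | h
  exacts [absurd h (notMem_bead_of_mem_inner hx), absurd h (notMem_bead_of_mem_inner hx),
    eq_of_mem_inner h hx]

lemma level_subset_segment (hik : i ≤ k) (hkj : k < j) : N.level k ⊆ N.segment i j :=
  fun _ hx => .inr ⟨k, hik, hkj, hx⟩

lemma segment_subset_segment_left (h : i ≤ i') : N.segment i' j ⊆ N.segment i j := by
  rintro x (hx | ⟨k, hk, hkj, hx⟩)
  exacts [.inl hx, .inr ⟨k, h.trans hk, hkj, hx⟩]

lemma segment_subset_segment_right (hij : i ≤ j) (hjk : j ≤ k) :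
    N.segment i j ⊆ N.segment i k := by
  rintro x (hx | ⟨l, hil, hlj, hx⟩)
  · rcases hjk.lt_or_eq with hjk | rfl
    exacts [level_subset_segment hij hjk (.inl hx), .inl hx]
  · exact level_subset_segment hil (hlj.trans_le hjk) hx

lemma segment_subset_union (i j k : ℕ) : N.segment i k ⊆ N.segment i j ∪ N.segment j k := by
  rintro x (hx | ⟨l, hil, hlk, hx⟩)
  · exact .inr (.inl hx)
  · rcases lt_or_ge l j with hlj | hjl
    exacts [.inl (level_subset_segment hil hlj hx), .inr (level_subset_segment hjl hlk hx)]

lemma exists_mem_level_of_mem_segment (hij : i ≤ j) (hx : x ∈ N.segment i j) :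
    ∃ k, i ≤ k ∧ x ∈ N.level k := by
  rcases hx with hx | ⟨k, hik, -, hx⟩
  exacts [⟨j, hij, .inl hx⟩, ⟨k, hik, hx⟩]

lemma exists_mem_segment_of_mem_beyond (hx : x ∈ N.beyond n) : ∃ m, n ≤ m ∧ x ∈ N.segment n m := by
  rcases hx with ⟨m, hnm, hx⟩ | ⟨m, hnm, hx⟩
  exacts [⟨m, hnm.le, .inl hx⟩,
    ⟨m + 1, by omega, level_subset_segment hnm m.lt_succ_self (inner_subset_level hx)⟩]

lemma exists_mem_level_of_mem_verts (hx : x ∈ N.verts) : ∃ k, x ∈ N.level k := by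
  rcases hx with hx | ⟨k, hx⟩
  · obtain ⟨k, hk⟩ := mem_iUnion.1 hx
    exact ⟨k, .inl hk⟩
  · exact ⟨k, .inr hx⟩

lemma segment_succ (h : i ≤ j) :
    N.segment i (j + 1) = N.segment i j ∪ (N.level j ∪ N.bead (j + 1)) := by
  ext x
  constructor
  · rintro (hx | ⟨k, hik, hkj, hx⟩)
    · exact .inr (.inr hx)
    · rcases (Nat.lt_succ_iff.1 hkj).lt_or_eq with hkj | rfl
      exacts [.inl (level_subset_segment hik hkj hx), .inr (.inl hx)]
  · rintro ((hx | hx) | hx | hx)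
    · exact level_subset_segment h j.lt_succ_self (.inl hx)
    · exact segment_subset_segment_right h j.le_succ (.inr hx)
    · exact level_subset_segment h j.lt_succ_self hx
    · exact .inl hx

variable (N)

lemma exists_forall_level_le (x : V) : ∃ b, ∀ k, x ∈ N.level k → k ≤ b := by
  by_cases h : ∃ k₀, x ∈ N.level k₀
  · obtain ⟨k₀, hk₀⟩ := h
    refine ⟨k₀ + 1, fun k hk => ?_⟩
    rcases mem_bead_or_mem_inner_of_mem_level hk₀ with h | h | h
    · have := level_eq_of_mem_bead h hk; omega
    · have := level_eq_of_mem_bead h hk; omega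
    · have := level_eq_of_mem_inner h hk; omega
  · exact ⟨0, fun k hk => absurd ⟨k, hk⟩ h⟩

lemma exists_forall_le_disjoint_level (X : Finset V) :
    ∃ n₀, ∀ k, n₀ ≤ k → Disjoint (N.level k) X := by
  choose b hb using N.exists_forall_level_le
  refine ⟨X.sup b + 1, fun k hk => disjoint_left.2 fun x hx hxX => ?_⟩
  have := hb x k hx
  have := Finset.le_sup (f := b) hxX
  omega

lemma finite_level (k : ℕ) : (N.level k).Finite :=
  (N.bead_fin k).union ((List.finite_toSet (N.fwd k)).union (List.finite_toSet (N.bwd k)))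

lemma finite_segment (i j : ℕ) : (N.segment i j).Finite :=
  ((N.bead_fin j).union ((finite_Iio j).biUnion fun k _ => N.finite_level k)).subset <| by
    rintro x (hx | ⟨k, -, hk, hx⟩)
    exacts [.inl hx, .inr (mem_biUnion hk hx)]

lemma bead_subset_segment (i j : ℕ) : N.bead j ⊆ N.segment i j := fun _ => .inl

lemma monotone_segment : Monotone (N.segment 0) :=
  fun _ _ h => segment_subset_segment_right (Nat.zero_le _) h

lemma verts_subset_iUnion_segment : N.verts ⊆ ⋃ m, N.segment 0 m := fun _ hx =>
  let ⟨k, hk⟩ := exists_mem_level_of_mem_verts hx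
  mem_iUnion.2 ⟨k + 1, level_subset_segment k.zero_le k.lt_succ_self hk⟩

lemma verts_subset_segment_union_beyond (n : ℕ) : N.verts ⊆ N.segment 0 n ∪ N.beyond n := by
  intro x hx
  have hbead : ∀ m, x ∈ N.bead m → x ∈ N.segment 0 n ∪ N.beyond n := fun m hm => by
    rcases le_or_gt m n with h | h
    exacts [.inl (segment_subset_segment_right m.zero_le h (N.bead_subset_segment 0 m hm)),
      .inr (.inl ⟨m, h, hm⟩)]
  obtain ⟨k, hk⟩ := exists_mem_level_of_mem_verts hx
  rcases mem_bead_or_mem_inner_of_mem_level hk with h | h | h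
  · exact hbead k h
  · exact hbead (k + 1) h
  · rcases lt_or_ge k n with hkn | hkn
    exacts [.inl (level_subset_segment k.zero_le hkn hk), .inr (.inr ⟨k, hkn, h⟩)]

lemma disjoint_segment_beyond (i n : ℕ) : Disjoint (N.segment i n) (N.beyond n) := by
  rw [disjoint_left]
  rintro x (hx | ⟨k, -, hk, hx⟩) (⟨m, hm, hxm⟩ | ⟨m, hm, hxm⟩)
  · exact hm.ne (bead_eq_of_mem hx hxm)
  · exact notMem_bead_of_mem_inner hxm hx
  · have := level_eq_of_mem_bead hxm hx; omega
  · have := level_eq_of_mem_inner hxm hx; omega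

lemma mem_verts_of_reachIn {S : Set V} {a b : V} (ha : a ∈ N.verts) (h : ReachIn N.edges S a b) :
    b ∈ N.verts := by
  rcases h.2.2.cases_tail with rfl | ⟨c, -, -, hcb⟩
  · exact ha
  · rcases hcb.2 with ⟨n, -, hb⟩ | ⟨n, hb | hb⟩
    exacts [.inl (mem_iUnion.2 ⟨n, hb⟩), .inr ⟨n, .inl (adjInList_mem_right hb)⟩,
      .inr ⟨n, .inr (adjInList_mem_right hb)⟩]

lemma stronglyConnectedIn_bead (n : ℕ) : StronglyConnectedIn N.edges (N.bead n) :=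
  fun a ha b hb => (N.bead_strong n a ha b hb).mono_rel fun _ hx _ hy hxy => ⟨hxy, .inl ⟨n, hx, hy⟩⟩

lemma isChain_edges_fwd (n : ℕ) : (N.fwd n).IsChain N.edges :=
  List.isChain_iff_forall_rel_of_append_cons_cons.2 fun _ _ l₁ l₂ h =>
    ⟨List.isChain_iff_forall_rel_of_append_cons_cons.1 (N.fwd_path n).2.2 h,
      .inr ⟨n, .inl ⟨l₁, l₂, h⟩⟩⟩

lemma isChain_edges_bwd (n : ℕ) : (N.bwd n).IsChain N.edges :=
  List.isChain_iff_forall_rel_of_append_cons_cons.2 fun _ _ l₁ l₂ h =>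
    ⟨List.isChain_iff_forall_rel_of_append_cons_cons.1 (N.bwd_path n).2.2 h,
      .inr ⟨n, .inr ⟨l₁, l₂, h⟩⟩⟩

lemma stronglyConnectedIn_level_union_bead (k : ℕ) :
    StronglyConnectedIn N.edges (N.level k ∪ N.bead (k + 1)) :=
  stronglyConnectedIn_cycle (N.stronglyConnectedIn_bead k) (N.stronglyConnectedIn_bead (k + 1))
    (N.isChain_edges_fwd k) (N.isChain_edges_bwd k) (N.fwd_path k).1 (N.bwd_path k).1
    (N.fwd_head k _ (List.head?_eq_some_head _)) (N.fwd_last k _ (List.getLast?_eq_some_getLast _))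
    (N.bwd_head k _ (List.head?_eq_some_head _)) (N.bwd_last k _ (List.getLast?_eq_some_getLast _))

lemma segment_self (i : ℕ) : N.segment i i = N.bead i :=
  ext fun _ => or_iff_left (by rintro ⟨k, h, h', -⟩; omega)

lemma stronglyConnectedIn_segment (h : i ≤ j) : StronglyConnectedIn N.edges (N.segment i j) := by
  induction j, h using Nat.le_induction with
  | base => rw [segment_self]; exact N.stronglyConnectedIn_bead i
  | succ j hij ih =>
    rw [segment_succ hij]
    obtain ⟨x, hx⟩ := N.bead_nonempty j
    exact ih.union (N.stronglyConnectedIn_level_union_bead j)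
      ⟨x, N.bead_subset_segment i j hx, .inl (.inl hx)⟩

end Necklace

namespace Necklace

variable {D E : V → V → Prop}

def transfer (N : Necklace D) (hbead : ∀ n, StronglyConnectedIn E (N.bead n))
    (hfwd : ∀ n, (N.fwd n).IsChain E) (hbwd : ∀ n, (N.bwd n).IsChain E) : Necklace E :=
  { N with
    bead_strong := hbead
    fwd_path := fun n => ⟨(N.fwd_path n).1, (N.fwd_path n).2.1, hfwd n⟩
    bwd_path := fun n => ⟨(N.bwd_path n).1, (N.bwd_path n).2.1, hbwd n⟩ }

def toEdges (N : Necklace D) : Necklace N.edges :=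
  N.transfer N.stronglyConnectedIn_bead N.isChain_edges_fwd N.isChain_edges_bwd

def induce (N : Necklace E) (C : Set V) (hC : N.verts ⊆ C) :
    Necklace (fun a b => E a b ∧ a ∈ C ∧ b ∈ C) :=
  N.transfer
    (fun n => StronglyConnectedIn.induce (N.bead_strong n) fun _ hx => hC (.inl (mem_iUnion.2 ⟨n, hx⟩)))
    (fun n => (N.fwd_path n).2.2.imp_of_mem_imp fun _ _ ha hb h =>
      ⟨h, hC (.inr ⟨n, .inl ha⟩), hC (.inr ⟨n, .inl hb⟩)⟩)
    (fun n => (N.bwd_path n).2.2.imp_of_mem_imp fun _ _ ha hb h =>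
      ⟨h, hC (.inr ⟨n, .inr ha⟩), hC (.inr ⟨n, .inr hb⟩)⟩)

def graft (N : Necklace D) (n : ℕ) (B : Set V) (hB : B.Finite) (hbead : N.bead n ⊆ B)
    (hdisj : Disjoint B (N.beyond n)) (hstrong : StronglyConnectedIn D B) : Necklace D where
  bead k := if k = 0 then B else N.bead (n + k)
  fwd k := N.fwd (n + k)
  bwd k := N.bwd (n + k)
  bead_fin k := by split_ifs; exacts [hB, N.bead_fin _]
  bead_nonempty k := by split_ifs; exacts [(N.bead_nonempty n).mono hbead, N.bead_nonempty _]
  bead_disj k l hkl := by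
    split_ifs with hk hl hl
    · exact absurd (hk.trans hl.symm) hkl
    · exact hdisj.mono_right fun x hx => .inl ⟨n + l, by omega, hx⟩
    · exact (hdisj.mono_right fun x hx => .inl ⟨n + k, by omega, hx⟩).symm
    · exact N.bead_disj _ _ (by omega)
  bead_strong k := by split_ifs; exacts [hstrong, N.bead_strong _]
  fwd_path k := N.fwd_path (n + k)
  bwd_path k := N.bwd_path (n + k)
  fwd_head k a ha := by
    split_ifs with hk
    · subst hk; exact hbead (N.fwd_head n a ha)
    · exact N.fwd_head _ a ha
  fwd_last k b hb := by rw [if_neg k.succ_ne_zero]; exact N.fwd_last _ b hb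
  bwd_head k a ha := by rw [if_neg k.succ_ne_zero]; exact N.bwd_head _ a ha
  bwd_last k b hb := by
    split_ifs with hk
    · subst hk; exact hbead (N.bwd_last n b hb)
    · exact N.bwd_last _ b hb
  fwd_inner k x hx m := by
    split_ifs
    · exact fun hxB => disjoint_left.1 hdisj hxB (.inr ⟨n + k, by omega, .inl hx⟩)
    · exact N.fwd_inner _ x hx _
  bwd_inner k x hx m := by
    split_ifs
    · exact fun hxB => disjoint_left.1 hdisj hxB (.inr ⟨n + k, by omega, .inr hx⟩)
    · exact N.bwd_inner _ x hx _
  fwd_fwd_disj k l hkl := N.fwd_fwd_disj _ _ (by omega)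
  bwd_bwd_disj k l hkl := N.bwd_bwd_disj _ _ (by omega)
  fwd_bwd_disj k l := N.fwd_bwd_disj _ _

section Graft

variable {N : Necklace D} {n : ℕ} {B : Set V} {hB : B.Finite} {hbead : N.bead n ⊆ B}
  {hdisj : Disjoint B (N.beyond n)} {hstrong : StronglyConnectedIn D B}

lemma verts_graft : (N.graft n B hB hbead hdisj hstrong).verts = B ∪ N.beyond n := by
  have hbead' : ∀ m, n ≤ m → ∀ x ∈ N.bead m, x ∈ B ∪ N.beyond n := fun m hm x hx => by
    rcases hm.lt_or_eq with hm | rfl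
    exacts [.inr (.inl ⟨m, hm, hx⟩), .inl (hbead hx)]
  ext x
  constructor
  · rintro (hx | ⟨k, hx | hx⟩)
    · obtain ⟨k, hx⟩ := mem_iUnion.1 hx
      by_cases hk : k = 0
      · simp only [graft, hk, if_true] at hx; exact .inl hx
      · simp only [graft, hk, if_false] at hx; exact hbead' _ (by omega) x hx
    · rcases List.head?_eq_or_getLast?_eq_or_mem_tail_dropLast hx with h | h | h
      exacts [hbead' _ le_self_add x (N.fwd_head _ x h),
        hbead' _ (by omega) x (N.fwd_last _ x h), .inr (.inr ⟨n + k, le_self_add, .inl h⟩)]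
    · rcases List.head?_eq_or_getLast?_eq_or_mem_tail_dropLast hx with h | h | h
      exacts [hbead' _ (by omega) x (N.bwd_head _ x h),
        hbead' _ le_self_add x (N.bwd_last _ x h), .inr (.inr ⟨n + k, le_self_add, .inr h⟩)]
  · rintro (hx | ⟨m, hnm, hx⟩ | ⟨m, hnm, hx⟩)
    · exact .inl (mem_iUnion.2 ⟨0, by simpa [graft] using hx⟩)
    · obtain ⟨k, rfl⟩ := Nat.exists_eq_add_of_lt hnm
      refine .inl (mem_iUnion.2 ⟨k + 1, ?_⟩)
      show x ∈ if k + 1 = 0 then B else N.bead (n + (k + 1))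
      rw [if_neg k.succ_ne_zero]
      exact hx
    · obtain ⟨k, rfl⟩ := Nat.exists_eq_add_of_le hnm
      exact .inr ⟨k, mem_fwd_or_mem_bwd_of_mem_inner hx⟩

lemma AttachedTo.graft {𝒰 : Finset (Set V)} (h : N.AttachedTo 𝒰) :
    (N.graft n B hB hbead hdisj hstrong).AttachedTo 𝒰 := by
  refine infinite_of_forall_exists_gt fun a => ?_
  obtain ⟨m, hm, ham⟩ := h.exists_gt (n + a)
  refine ⟨m - n, ?_, by omega⟩
  show ∀ U ∈ 𝒰, ((if m - n = 0 then B else N.bead (n + (m - n))) ∩ U).Nonempty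
  rw [if_neg (by omega), Nat.add_sub_cancel' (by omega)]
  exact hm

end Graft

variable (N : Necklace D) {C : Set V}

/-- The walks joining the finitely many vertices of `C` in `segment 0 n₀` use only finitely many
levels, and the later vertices are reached through the strongly connected segments. -/
lemma exists_stronglyConnectedIn_inter_segment {n₀ : ℕ} (hC : StronglyConnectedIn N.edges C)
    (hverts : C ⊆ N.verts) (hseg : ∀ m, n₀ ≤ m → N.segment n₀ m ⊆ C) :
    ∃ n, n₀ ≤ n ∧ StronglyConnectedIn N.edges (C ∩ N.segment 0 n) := by
  obtain ⟨a, ha⟩ := N.bead_nonempty n₀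
  have haK : a ∈ C ∩ N.segment 0 n₀ :=
    ⟨hseg n₀ le_rfl (N.bead_subset_segment n₀ n₀ ha), N.bead_subset_segment 0 n₀ ha⟩
  obtain ⟨M, hM⟩ := exists_reachIn_inter_of_finite N.monotone_segment
    (hverts.trans N.verts_subset_iUnion_segment) hC ((N.finite_segment 0 n₀).inter_of_right C)
    inter_subset_left
  set n := max M n₀
  have hMn : C ∩ N.segment 0 M ⊆ C ∩ N.segment 0 n :=
    inter_subset_inter_right _ (N.monotone_segment (le_max_left _ _))
  have hlate : N.segment n₀ n ⊆ C ∩ N.segment 0 n :=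
    subset_inter (hseg n (le_max_right _ _)) (segment_subset_segment_left n₀.zero_le)
  have hlate_strong := N.stronglyConnectedIn_segment (le_max_right M n₀)
  have ha' : a ∈ N.segment n₀ n :=
    segment_subset_segment_right le_rfl (le_max_right _ _) (N.bead_subset_segment n₀ n₀ ha)
  refine ⟨n, le_max_right _ _, stronglyConnectedIn_of_root (r := a) fun x ⟨hxC, hx⟩ => ?_⟩
  rcases segment_subset_union 0 n₀ n hx with hx | hx
  · exact ⟨(hM a haK x ⟨hxC, hx⟩).mono hMn, (hM x ⟨hxC, hx⟩ a haK).mono hMn⟩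
  · exact ⟨(hlate_strong a ha' x hx).mono hlate, (hlate_strong x hx a ha').mono hlate⟩

lemma exists_necklace_of_segment_subset {𝒰 : Finset (Set V)} {n : ℕ} (hN : N.AttachedTo 𝒰)
    (hverts : C ⊆ N.verts) (hseg : ∀ m, n ≤ m → N.segment n m ⊆ C)
    (hstrong : StronglyConnectedIn N.edges (C ∩ N.segment 0 n)) :
    ∃ M : Necklace (fun a b => N.edges a b ∧ a ∈ C ∧ b ∈ C), M.verts = C ∧ M.AttachedTo 𝒰 := by
  have hbeyond : N.beyond n ⊆ C := fun x hx =>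
    let ⟨m, hnm, hxm⟩ := exists_mem_segment_of_mem_beyond hx
    hseg m hnm hxm
  let G := N.toEdges.graft n (C ∩ N.segment 0 n) ((N.finite_segment 0 n).inter_of_right C)
    (subset_inter ((N.bead_subset_segment n n).trans (hseg n le_rfl)) (N.bead_subset_segment 0 n))
    ((N.disjoint_segment_beyond 0 n).mono_left inter_subset_right) hstrong
  have hG : G.verts = C := by
    refine verts_graft.trans (Subset.antisymm (union_subset inter_subset_left hbeyond) ?_)
    exact fun x hx => (N.verts_subset_segment_union_beyond n (hverts hx)).imp (⟨hx, ·⟩) id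
  have hGatt : G.AttachedTo 𝒰 := AttachedTo.graft (N := N.toEdges) hN
  exact ⟨G.induce C hG.le, hG, hGatt⟩

end Necklace

/-- Deleting finitely many vertices from a necklace attached to `𝒰` leaves a strong component
that is itself a necklace attached to `𝒰`. -/
theorem necklace_delete_finite (D : V → V → Prop) (N : Necklace D) (𝒰 : Finset (Set V))
    (hN : N.AttachedTo 𝒰) (X : Finset V) :
    ∃ C, IsSCCIn N.edges ((↑X : Set V)ᶜ) C ∧
      ∃ M : Necklace (fun a b => N.edges a b ∧ a ∈ C ∧ b ∈ C),
        M.verts = C ∧ M.AttachedTo 𝒰 := by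
  obtain ⟨n₀, hn₀⟩ := N.exists_forall_le_disjoint_level X
  have hsegX : ∀ m, n₀ ≤ m → N.segment n₀ m ⊆ (↑X : Set V)ᶜ := fun m hm x hx =>
    let ⟨k, hk, hxk⟩ := N.exists_mem_level_of_mem_segment hm hx
    disjoint_left.1 (hn₀ k hk) hxk
  obtain ⟨a, ha⟩ := N.bead_nonempty n₀
  have ha_seg : ∀ m, n₀ ≤ m → a ∈ N.segment n₀ m := fun m hm =>
    Necklace.segment_subset_segment_right le_rfl hm (N.bead_subset_segment n₀ n₀ ha)
  set C := sccOf N.edges (↑X : Set V)ᶜ a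
  have hseg : ∀ m, n₀ ≤ m → N.segment n₀ m ⊆ C := fun m hm =>
    (N.stronglyConnectedIn_segment hm).subset_sccOf (hsegX m hm) (ha_seg m hm)
  have hverts : C ⊆ N.verts := fun x hx =>
    N.mem_verts_of_reachIn (.inl (mem_iUnion.2 ⟨n₀, ha⟩)) hx.1
  obtain ⟨n, hn, hstrong⟩ :=
    N.exists_stronglyConnectedIn_inter_segment stronglyConnectedIn_sccOf hverts hseg
  refine ⟨C, isSCCIn_sccOf (hsegX n₀ le_rfl (ha_seg n₀ le_rfl)),
    N.exists_necklace_of_segment_subset hN hverts (fun m hm => ?_) hstrong⟩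
  exact (Necklace.segment_subset_segment_left hn).trans (hseg m (hn.trans hm))
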